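/- Let g : ℝ → ℝ be smooth (C^∞) with g(0) = g'(0) = ⋯ = g^(2k)(0) = 0 and g^(2k+1)(0) ≠ 0. Then there exist a > 0 and a function g̃ : (-a,a) → ℝ of class C^∞ such that g(x) = g̃(x)^(2k+1) for all x ∈ (-a,a), and g̃'(x) ≠ 0 for all x ∈ (-a,a). In particular g̃ is a diffeomorphism from (-a,a) onto its image. -/

import Mathlib

open Filter Metric Set Function Topology

lemma root_pos_case (n : ℕ) (hn : n ≠ 0) (h : ℝ → ℝ) (a₀ : ℝ) (ha₀ : 0 < a₀)
    (hh : ∀ x ∈ ball (0:ℝ) a₀, ContDiffAt ℝ (⊤ : ℕ∞) h x) (hpos : 0 < h 0) :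
    ∃ a > (0:ℝ), a ≤ a₀ ∧ ∃ gt : ℝ → ℝ,
      ContDiffOn ℝ (⊤ : ℕ∞) gt (Set.Ioo (-a) a) ∧
      (∀ x ∈ Set.Ioo (-a) a, x ^ n * h x = gt x ^ n) ∧
      (∀ x ∈ Set.Ioo (-a) a, 0 < deriv gt x) ∧
      Set.InjOn gt (Set.Ioo (-a) a) := by
  have hcont : ContinuousAt h 0 := (hh 0 (mem_ball_self ha₀)).continuousAt
  have hev : ∀ᶠ x in 𝓝 (0:ℝ), 0 < h x := hcont.eventually_const_lt hpos
  obtain ⟨ε, hε, hball⟩ := Metric.eventually_nhds_iff.mp hev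
  set a₁ := min ε a₀ with ha₁_def
  have ha₁ : 0 < a₁ := lt_min hε ha₀
  have hposU : ∀ x ∈ ball (0:ℝ) a₁, 0 < h x := fun x hx =>
    hball (lt_of_lt_of_le (mem_ball.mp hx) (min_le_left _ _))
  have hhU : ∀ x ∈ ball (0:ℝ) a₁, ContDiffAt ℝ (⊤ : ℕ∞) h x := fun x hx =>
    hh x (mem_ball.mpr (lt_of_lt_of_le (mem_ball.mp hx) (min_le_right _ _)))
  set φ : ℝ → ℝ := fun y => Real.exp (Real.log (h y) * (n : ℝ)⁻¹) with hφ_def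
  set gt : ℝ → ℝ := fun y => y * φ y with hgt_def
  have hφan : ∀ x ∈ ball (0:ℝ) a₁, ContDiffAt ℝ (⊤ : ℕ∞) φ x := fun x hx =>
    Real.contDiff_exp.contDiffAt.comp x
      (((Real.contDiffAt_log.mpr (hposU x hx).ne').comp x (hhU x hx)).mul contDiffAt_const)
  have hanU : ∀ x ∈ ball (0:ℝ) a₁, ContDiffAt ℝ (⊤ : ℕ∞) gt x := fun x hx =>
    contDiffAt_id.mul (hφan x hx)
  have hgtc : ContDiffOn ℝ (⊤ : ℕ∞) gt (ball (0:ℝ) a₁) :=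
    fun x hx => (hanU x hx).contDiffWithinAt
  -- derivative at 0
  have hφd : DifferentiableAt ℝ φ 0 := (hφan 0 (mem_ball_self ha₁)).differentiableAt (by simp)
  have hd0 : HasDerivAt gt (1 * φ 0 + 0 * deriv φ 0) 0 := (hasDerivAt_id 0).mul hφd.hasDerivAt
  have hderiv0 : deriv gt 0 = φ 0 := by simpa using hd0.deriv
  have hd0pos : 0 < deriv gt 0 := by rw [hderiv0]; exact Real.exp_pos _
  have hcd : ContinuousOn (deriv gt) (ball (0:ℝ) a₁) :=
    hgtc.continuousOn_deriv_of_isOpen isOpen_ball (by simp)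
  have hca : ContinuousAt (deriv gt) 0 :=
    hcd.continuousAt (isOpen_ball.mem_nhds (mem_ball_self ha₁))
  obtain ⟨ε₂, hε₂, hball₂⟩ := Metric.eventually_nhds_iff.mp (hca.eventually_const_lt hd0pos)
  set a := min a₁ ε₂ with ha_def
  have ha : 0 < a := lt_min ha₁ hε₂
  have hsub : Set.Ioo (-a) a ⊆ ball (0:ℝ) a₁ := by
    intro x hx
    rw [mem_ball, Real.dist_eq, sub_zero, abs_lt]
    exact ⟨lt_of_le_of_lt (neg_le_neg (min_le_left _ _)) hx.1,
      lt_of_lt_of_le hx.2 (min_le_left _ _)⟩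
  have hderivpos : ∀ x ∈ Set.Ioo (-a) a, 0 < deriv gt x := by
    intro x hx
    apply hball₂
    rw [Real.dist_eq, sub_zero, abs_lt]
    exact ⟨lt_of_le_of_lt (neg_le_neg (min_le_right _ _)) hx.1,
      lt_of_lt_of_le hx.2 (min_le_right _ _)⟩
  refine ⟨a, ha, le_trans (min_le_left _ _) (min_le_right _ _), gt,
    hgtc.mono hsub, ?_, hderivpos, ?_⟩
  · intro x hx
    have hxp := hposU x (hsub hx)
    have : φ x ^ n = h x := by
      rw [hφ_def]
      rw [← Real.exp_nat_mul]
      rw [show (n : ℝ) * (Real.log (h x) * (n : ℝ)⁻¹) = Real.log (h x) by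
        field_simp]
      exact Real.exp_log hxp
    rw [hgt_def]
    simp only [mul_pow, this]
  · exact (strictMonoOn_of_deriv_pos (convex_Ioo _ _)
      ((hgtc.mono hsub).continuousOn) (fun x hx => hderivpos x (by rwa [interior_Ioo] at hx))).injOn

lemma hasDerivAt_wint (w : ℝ → ℝ) (hw : Continuous w) (F : ℝ → ℝ)
    (hF : ContDiff ℝ (⊤ : ℕ∞) F) (x₀ : ℝ) :
    HasDerivAt (fun x => ∫ t in (0:ℝ)..1, w t * F (t * x))
      (∫ t in (0:ℝ)..1, w t * t * deriv F (t * x₀)) x₀ := by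
  have hFc : Continuous F := hF.continuous
  have hF'c : Continuous (deriv F) := hF.continuous_deriv (by simp)
  have hFd : Differentiable ℝ F := hF.differentiable (by simp)
  obtain ⟨C, hC⟩ := (isCompact_Icc (a := (0:ℝ)) (b := 1)).prod (isCompact_closedBall x₀ 1)
    |>.exists_bound_of_continuousOn
      (f := fun p : ℝ × ℝ => w p.1 * p.1 * deriv F (p.1 * p.2)) (by fun_prop)
  refine (intervalIntegral.hasDerivAt_integral_of_dominated_loc_of_deriv_le
    (F := fun x t => w t * F (t * x)) (F' := fun x t => w t * t * deriv F (t * x))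
    (bound := fun _ => C) (ball_mem_nhds x₀ one_pos)
    (Eventually.of_forall fun x => (by fun_prop : Continuous fun t => w t * F (t * x)).aestronglyMeasurable)
    ((by fun_prop : Continuous fun t => w t * F (t * x₀)).intervalIntegrable _ _)
    ((by fun_prop : Continuous fun t => w t * t * deriv F (t * x₀)).aestronglyMeasurable)
    ?_ intervalIntegrable_const ?_).2
  · refine Eventually.of_forall fun t ht x hx => ?_
    rw [Set.uIoc_of_le zero_le_one] at ht
    exact hC (t, x) ⟨Ioc_subset_Icc_self ht, ball_subset_closedBall hx⟩
  · refine Eventually.of_forall fun t _ x _ => ?_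
    have := ((hFd (t * x)).hasDerivAt.comp x ((hasDerivAt_id' x).const_mul t)).const_mul (w t)
    exact this.congr_deriv (by ring)

lemma contDiff_wint (n : ℕ) : ∀ (w : ℝ → ℝ), Continuous w → ∀ (F : ℝ → ℝ),
    ContDiff ℝ (⊤ : ℕ∞) F → ContDiff ℝ n (fun x => ∫ t in (0:ℝ)..1, w t * F (t * x)) := by
  induction n with
  | zero =>
    intro w hw F hF
    exact contDiff_zero.mpr
      (continuous_iff_continuousAt.mpr fun x => (hasDerivAt_wint w hw F hF x).continuousAt)
  | succ n ih =>
    intro w hw F hF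
    have hderiv : deriv (fun x => ∫ t in (0:ℝ)..1, w t * F (t * x)) =
        fun x => ∫ t in (0:ℝ)..1, (fun t => w t * t) t * deriv F (t * x) := by
      funext x
      exact (hasDerivAt_wint w hw F hF x).deriv
    rw [show ((n + 1 : ℕ) : WithTop ℕ∞) = (n : WithTop ℕ∞) + 1 by norm_cast,
      contDiff_succ_iff_deriv]
    refine ⟨fun x => (hasDerivAt_wint w hw F hF x).differentiableAt, by simp, ?_⟩
    rw [hderiv]
    exact ih _ (by fun_prop) _ (contDiff_infty_iff_deriv.mp hF).2

lemma contDiff_dslope_zero (f : ℝ → ℝ) (hf : ContDiff ℝ (⊤ : ℕ∞) f) :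
    ContDiff ℝ (⊤ : ℕ∞) (dslope f 0) := by
  have heq : dslope f 0 = fun x => ∫ t in (0:ℝ)..1, (fun _ => (1:ℝ)) t * deriv f (t * x) := by
    funext x
    by_cases hx : x = 0
    · subst hx
      rw [dslope_same]
      simp
    · rw [dslope_of_ne _ hx, slope_def_field]
      simp only [one_mul]
      rw [intervalIntegral.integral_comp_mul_right (f := deriv f) hx]
      simp only [zero_mul, one_mul, smul_eq_mul]
      rw [intervalIntegral.integral_deriv_eq_sub
        (fun y _ => (hf.differentiable (by simp)).differentiableAt)
        ((hf.continuous_deriv (by simp)).intervalIntegrable _ _)]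
      rw [sub_zero, div_eq_inv_mul]
  rw [heq]
  exact contDiff_infty.mpr fun n =>
    contDiff_wint n _ continuous_const _ (contDiff_infty_iff_deriv.mp hf).2

theorem stmt_7 (k : ℕ) (hk : 1 ≤ k) (g : ℝ → ℝ) (hg : ContDiff ℝ (⊤ : ℕ∞) g)
    (h0 : ∀ j : ℕ, j ≤ 2 * k → iteratedDeriv j g 0 = 0)
    (h1 : iteratedDeriv (2 * k + 1) g 0 ≠ 0) :
    ∃ a > (0 : ℝ), ∃ gt : ℝ → ℝ,
      ContDiffOn ℝ (⊤ : ℕ∞) gt (Set.Ioo (-a) a) ∧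
      (∀ x ∈ Set.Ioo (-a) a, g x = gt x ^ (2 * k + 1)) ∧
      (∀ x ∈ Set.Ioo (-a) a, deriv gt x ≠ 0) ∧
      Set.InjOn gt (Set.Ioo (-a) a) := by
  set m := 2 * k + 1 with hm
  set q : ℕ → ℝ → ℝ := fun i => (Function.swap dslope 0)^[i] g with hq_def
  have hq_smooth : ∀ i, ContDiff ℝ (⊤ : ℕ∞) (q i) := by
    intro i
    induction i with
    | zero => exact hg
    | succ i ih =>
      simp only [hq_def, Function.iterate_succ_apply']
      exact contDiff_dslope_zero _ ih
  set c : ℝ := iteratedDeriv m g 0 / (m.factorial : ℝ) with hc_def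
  have hTay : ∀ x, taylorWithinEval g m univ 0 x = c * x ^ m := by
    intro x
    rw [taylor_within_apply, Finset.sum_range_succ, Finset.sum_eq_zero]
    · rw [iteratedDerivWithin_univ, sub_zero, smul_eq_mul, zero_add, hc_def]
      ring
    · intro j hj
      rw [Finset.mem_range] at hj
      rw [iteratedDerivWithin_univ, h0 j (by omega), smul_zero]
  have hlo := taylor_isLittleO_univ (x₀ := 0) (contDiff_infty.mp hg m)
  simp only [hTay, sub_zero] at hlo
  have hT : Tendsto (fun x => g x / x ^ m) (𝓝[≠] 0) (𝓝 c) := by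
    have h2 := (hlo.tendsto_div_nhds_zero.mono_left (nhdsWithin_le_nhds (s := {(0:ℝ)}ᶜ))).add_const c
    rw [zero_add] at h2
    refine h2.congr' ?_
    filter_upwards [self_mem_nhdsWithin] with x hx
    have hx' : x ≠ 0 := hx
    simp only [sub_div, mul_div_assoc, div_self (pow_ne_zero _ hx'), mul_one, sub_add_cancel]
  have hlim : ∀ i, (∀ j < i, q j 0 = 0) →
      Tendsto (fun x => g x / x ^ i) (𝓝[≠] 0) (𝓝 (q i 0)) := by
    intro i hi
    have hcq := ((hq_smooth i).continuous.continuousAt (x := 0)).tendsto.mono_left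
      (nhdsWithin_le_nhds (s := {(0:ℝ)}ᶜ))
    refine hcq.congr' ?_
    filter_upwards [self_mem_nhdsWithin] with x hx
    have hx' : x ≠ 0 := hx
    have := pow_sub_smul_iterate_dslope_of_zero i hi x
    rw [sub_zero, smul_eq_mul] at this
    rw [eq_div_iff (pow_ne_zero _ hx'), mul_comm]
    exact this
  have hz : ∀ i, i < m → q i 0 = 0 := by
    intro i
    refine Nat.strong_induction_on i ?_
    intro i ih hi
    have L1 := hlim i (fun j hj => ih j hj (by omega))
    have L2 : Tendsto (fun x => g x / x ^ i) (𝓝[≠] 0) (𝓝 0) := by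
      have := hT.mul (((continuous_pow (m - i)).tendsto (0:ℝ)).mono_left nhdsWithin_le_nhds)
      rw [zero_pow (by omega), mul_zero] at this
      refine this.congr' ?_
      filter_upwards [self_mem_nhdsWithin] with x hx
      have hx' : x ≠ 0 := hx
      have hxm : x ^ m = x ^ i * x ^ (m - i) := by
        rw [← pow_add]
        congr 1
        omega
      rw [hxm]
      field_simp
    exact tendsto_nhds_unique L1 L2
  set h : ℝ → ℝ := q m with hh_def
  have hh0 : h 0 ≠ 0 := by
    rw [hh_def, tendsto_nhds_unique (hlim m (fun j hj => hz j hj)) hT, hc_def]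
    exact div_ne_zero h1 (Nat.cast_ne_zero.mpr (Nat.factorial_ne_zero _))
  have heq : ∀ᶠ z in 𝓝 (0:ℝ), g z = z ^ (2 * k + 1) * h z := by
    filter_upwards with z
    have := pow_sub_smul_iterate_dslope_of_zero m (fun j hj => hz j hj) z
    rw [sub_zero, smul_eq_mul] at this
    exact this.symm
  have hh_ev : ∀ᶠ z in 𝓝 (0:ℝ), ContDiffAt ℝ (⊤ : ℕ∞) h z :=
    Eventually.of_forall fun z => (hq_smooth m).contDiffAt
  obtain ⟨a₀, ha₀, hball⟩ := Metric.eventually_nhds_iff.mp (heq.and hh_ev)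
  rcases hh0.lt_or_gt with hneg | hpos
  · -- h 0 < 0 : apply to -h
    obtain ⟨a, ha, haa₀, gt₀, hc₀, hpow₀, hd₀, hinj₀⟩ :=
      root_pos_case (2 * k + 1) (by omega) (fun y => -h y) a₀ ha₀
        (fun x hx => ((hball (mem_ball.mp hx)).2).neg) (by simpa using hneg)
    refine ⟨a, ha, fun x => -gt₀ x, hc₀.neg, ?_, ?_, ?_⟩
    · intro x hx
      have hdx : dist x 0 < a₀ := by
        rw [Real.dist_eq, sub_zero, abs_lt]
        exact ⟨lt_of_le_of_lt (neg_le_neg haa₀) hx.1, lt_of_lt_of_le hx.2 haa₀⟩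
      rw [(hball hdx).1, Odd.neg_pow (odd_two_mul_add_one k)]
      have := hpow₀ x hx
      rw [← this]
      ring
    · intro x hx
      rw [deriv.fun_neg]
      exact neg_ne_zero.mpr (ne_of_gt (hd₀ x hx))
    · intro x hx y hy hxy
      exact hinj₀ hx hy (neg_inj.mp hxy)
  · obtain ⟨a, ha, haa₀, gt, hc, hpow, hd, hinj⟩ :=
      root_pos_case (2 * k + 1) (by omega) h a₀ ha₀
        (fun x hx => (hball (mem_ball.mp hx)).2) hpos
    refine ⟨a, ha, gt, hc, ?_, fun x hx => ne_of_gt (hd x hx), hinj⟩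
    intro x hx
    have hdx : dist x 0 < a₀ := by
      rw [Real.dist_eq, sub_zero, abs_lt]
      exact ⟨lt_of_le_of_lt (neg_le_neg haa₀) hx.1, lt_of_lt_of_le hx.2 haa₀⟩
    rw [(hball hdx).1, hpow x hx]
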